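/- Let K be a field, n ≥ 1, and p ∈ K^n. Then the 'curiously commuting vectors' identity [g, F_p g, …, F_p^{n-1} g] b = [b, F_p b, …, F_p^{n-1} b] g holds for all b, g ∈ K^n. -/

import Mathlib

open Matrix

/-- The second companion matrix `F_p` of `p ∈ K^{n+1}`: columns `0,…,n-1` are
`e_1,…,e_n` and the last column is `p`. -/
def companion {K : Type*} [Field K] {n : ℕ} (p : Fin (n + 1) → K) :
    Matrix (Fin (n + 1)) (Fin (n + 1)) K :=
  Matrix.of fun i j => if j = Fin.last n then p i else if (i : ℕ) = (j : ℕ) + 1 then 1 else 0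

/-- The reachability (Krylov) matrix `R(A, g) = [g, Ag, …, A^{n-1} g]`. -/
def krylov {K : Type*} [Field K] {n : ℕ} (A : Matrix (Fin n) (Fin n) K) (g : Fin n → K) :
    Matrix (Fin n) (Fin n) K :=
  Matrix.of fun i j => (A ^ (j : ℕ)).mulVec g i

/-- `b(A) = Σ_{i=0}^{n-1} b_i A^i`. -/
def polyEval {K : Type*} [Field K] {n : ℕ} (b : Fin n → K) (A : Matrix (Fin n) (Fin n) K) :
    Matrix (Fin n) (Fin n) K :=
  ∑ i : Fin n, b i • A ^ (i : ℕ)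

/-!
`R(A, g) b = b(A) g`, and any two polynomials in `A` commute. For `A = F_p` the vector `e_0` is
cyclic with `F_p^k e_0 = e_k`, so `R(F_p, e_0) = 1` and hence `g = g(F_p) e_0`. Therefore
`R(F_p, g) b = b(F_p) g(F_p) e_0 = g(F_p) b(F_p) e_0 = R(F_p, b) g`.
-/

section

variable {K : Type*} [Field K] {n : ℕ}

theorem krylov_mulVec (A : Matrix (Fin n) (Fin n) K) (g b : Fin n → K) :
    krylov A g *ᵥ b = polyEval b A *ᵥ g := by
  rw [polyEval, sum_mulVec]
  ext i
  simp only [krylov, mulVec, dotProduct, of_apply, Finset.sum_apply, smul_mulVec, Pi.smul_apply,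
    smul_eq_mul]
  exact Finset.sum_congr rfl fun j _ => mul_comm _ _

theorem commute_polyEval (A : Matrix (Fin n) (Fin n) K) (b g : Fin n → K) :
    Commute (polyEval b A) (polyEval g A) :=
  Commute.sum_left _ _ _ fun _ _ => Commute.sum_right _ _ _ fun _ _ =>
    (((Commute.refl A).pow_pow _ _).smul_left _).smul_right _

theorem krylov_mulVec_comm_of_krylov_eq_one {A : Matrix (Fin n) (Fin n) K} {e : Fin n → K}
    (he : krylov A e = 1) (b g : Fin n → K) :
    krylov A g *ᵥ b = krylov A b *ᵥ g := by
  have eval_cyclic (v : Fin n → K) : polyEval v A *ᵥ e = v := by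
    rw [← krylov_mulVec, he, one_mulVec]
  rw [krylov_mulVec, krylov_mulVec]
  conv_lhs => rw [← eval_cyclic g, mulVec_mulVec, (commute_polyEval A b g).eq]
  conv_rhs => rw [← eval_cyclic b, mulVec_mulVec]

theorem companion_mulVec_single_castSucc (p : Fin (n + 1) → K) (j : Fin n) :
    companion p *ᵥ Pi.single j.castSucc 1 = Pi.single j.succ 1 := by
  ext i
  rw [mulVec_single_one, col_apply, companion, of_apply, if_neg (Fin.castSucc_lt_last j).ne,
    Pi.single_apply]
  simp only [Fin.ext_iff, Fin.val_castSucc, Fin.val_succ]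

theorem companion_pow_mulVec_single_zero (p : Fin (n + 1) → K) (k : Fin (n + 1)) :
    companion p ^ (k : ℕ) *ᵥ Pi.single 0 1 = Pi.single k 1 := by
  induction k using Fin.induction with
  | zero => rw [Fin.val_zero, pow_zero, one_mulVec]
  | succ k ih =>
    rw [Fin.val_succ, pow_succ', ← mulVec_mulVec, ← Fin.val_castSucc, ih,
      companion_mulVec_single_castSucc]

theorem krylov_companion_single_zero (p : Fin (n + 1) → K) :
    krylov (companion p) (Pi.single 0 1) = 1 := by
  ext i j
  rw [krylov, of_apply, companion_pow_mulVec_single_zero, Pi.single_apply, one_apply]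

end

/-- The "curiously commuting vectors" identity
`[g, F_p g, …, F_p^{n-1} g] b = [b, F_p b, …, F_p^{n-1} b] g`. -/
theorem companion_krylov_symm {K : Type*} [Field K] {n : ℕ} (p : Fin (n + 1) → K)
    (b g : Fin (n + 1) → K) :
    (krylov (companion p) g).mulVec b = (krylov (companion p) b).mulVec g :=
  krylov_mulVec_comm_of_krylov_eq_one (krylov_companion_single_zero p) b g
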